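/- arXiv:2401.02577 — 5 statements merged into one kernel-verified Lean document; each statement's English description precedes it below -/
import Mathlib

section
/- Non-archimedean identity theorem (the Proposition of §1.2.3): let m be a natural number and let f : (Fin m → ℤ) → Λ be strictly convergent relative to γ = 0, i.e. for every r ∈ ℝ the set {ν | f ν ≠ 0 and v(f ν) ≤ r} is finite. Suppose that for every y : Fin m → Λ with v(y i) = 0 for all i, the family ν ↦ f ν · ∏_i (y i)^(ν i) is a summable family whose sum equals 0. Then f ν = 0 for every ν. (In the paper's notation: a convergent Laurent formal power series f = Σ_ν c_ν Y^ν over Λ that vanishes on U_Λ^m is identically zero.) -/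
/-!
Substituting constant units `y i = C (c i)` with `c : Fin m → ℂˣ` and reading off the coefficient
of `T^r` turns the vanishing hypothesis into the vanishing on the torus `(ℂˣ)^m` of the Laurent
polynomial `Σ_ν (f ν).coeff r · c^ν`, whose support is finite by strict convergence. The Laurent
monomials are pairwise distinct characters of the torus, so by Dedekind's independence of
characters all these coefficients vanish.
-/

/-- The Novikov-type field: Hahn series with real exponents and complex coefficients. -/
noncomputable abbrev Λ : Type := HahnSeries ℝ ℂ

/-- The canonical additive valuation on `Λ`. -/
noncomputable def v (x : Λ) : WithTop ℝ := HahnSeries.addVal ℝ ℂ x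

open Polynomial in
theorem Field.exists_unit_zpow_ne_one (K : Type*) [Field K] [Infinite K] {k : ℤ} (hk : k ≠ 0) :
    ∃ t : Kˣ, t ^ k ≠ 1 := by
  classical
  obtain ⟨t, ht⟩ :=
    Infinite.exists_notMem_finset (insert 0 (nthRoots k.natAbs (1 : K)).toFinset)
  rw [Finset.mem_insert, Multiset.mem_toFinset, mem_nthRoots (Int.natAbs_pos.mpr hk), not_or] at ht
  refine ⟨Units.mk0 t ht.1, fun h => ht.2 ?_⟩
  rw [← pow_natAbs_eq_one] at h
  simpa using congr_arg Units.val h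

section LaurentMonomial

variable {σ K : Type*} [Fintype σ] [Field K]

def laurentMonomial (ν : σ → ℤ) : (σ → Kˣ) →* K :=
  (Units.coeHom K).comp (∏ i, (zpowGroupHom (ν i)).comp (Pi.evalMonoidHom _ i))

theorem laurentMonomial_apply (ν : σ → ℤ) (c : σ → Kˣ) :
    laurentMonomial ν c = ∏ i, (c i : K) ^ ν i := by
  simp [laurentMonomial]

theorem laurentMonomial_mulSingle [DecidableEq σ] (ν : σ → ℤ) (j : σ) (t : Kˣ) :
    laurentMonomial ν (Pi.mulSingle j t) = (t : K) ^ ν j := by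
  rw [laurentMonomial_apply, Finset.prod_eq_single j (fun i _ hi => by simp [hi]) (by simp)]
  simp

theorem laurentMonomial_injective [Infinite K] :
    Function.Injective (laurentMonomial : (σ → ℤ) → (σ → Kˣ) →* K) := by
  classical
  intro ν μ h
  by_contra hne
  obtain ⟨j, hj⟩ := Function.ne_iff.mp hne
  obtain ⟨t, ht⟩ := Field.exists_unit_zpow_ne_one K (sub_ne_zero.mpr hj)
  have hνμ : t ^ ν j = t ^ μ j := Units.ext <| by
    simpa [laurentMonomial_mulSingle] using DFunLike.congr_fun h (Pi.mulSingle j t)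
  exact ht (by rw [zpow_sub, hνμ, mul_inv_cancel])

theorem eq_zero_of_finsum_mul_prod_zpow_eq_zero [Infinite K] {a : (σ → ℤ) → K}
    (ha : (Function.support a).Finite)
    (h : ∀ c : σ → Kˣ, ∑ᶠ ν, a ν * ∏ i, (c i : K) ^ ν i = 0) : a = 0 := by
  have hli := (linearIndependent_monoidHom (σ → Kˣ) K).comp _ laurentMonomial_injective
  have := linearIndependent_iff.mp hli (Finsupp.ofSupportFinite a ha) ?_
  · ext ν
    simpa [Finsupp.ofSupportFinite_coe] using DFunLike.congr_fun this ν
  · ext c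
    rw [Pi.zero_apply, ← h c,
      finsum_eq_sum_of_support_subset _ (s := (Finsupp.ofSupportFinite a ha).support)]
    · simp [Finsupp.linearCombination_apply, Finsupp.sum, laurentMonomial_apply,
        Finsupp.ofSupportFinite_coe]
    · intro ν hν
      simpa [Finsupp.ofSupportFinite_coe] using left_ne_zero_of_mul hν

end LaurentMonomial

theorem HahnSeries.addVal_C {Γ R : Type*} [AddCancelCommMonoid Γ] [LinearOrder Γ]
    [IsOrderedCancelAddMonoid Γ] [Ring R] [IsDomain R] {r : R} (hr : r ≠ 0) :
    addVal Γ R (C r) = 0 := by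
  rw [addVal_apply, C_apply, orderTop_single hr]
  rfl

theorem HahnSeries.coeff_mul_prod_C_zpow {Γ R ι : Type*} [AddCommGroup Γ] [LinearOrder Γ]
    [IsOrderedAddMonoid Γ] [Field R] [Fintype ι] (x : HahnSeries Γ R) (c : ι → R) (ν : ι → ℤ)
    (g : Γ) :
    (x * ∏ i, C (c i) ^ ν i).coeff g = x.coeff g * ∏ i, c i ^ ν i := by
  simp_rw [← map_zpow₀, ← map_prod, C_apply, coeff_mul_single_zero]

/-- Non-archimedean identity theorem: a strictly convergent Laurent formal power series
`f = Σ_ν c_ν Y^ν` over `Λ` that vanishes on `U_Λ^m` is identically zero. -/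
theorem identity_theorem (m : ℕ) (f : (Fin m → ℤ) → Λ)
    (hconv : ∀ r : ℝ, {ν : Fin m → ℤ | f ν ≠ 0 ∧ v (f ν) ≤ (r : WithTop ℝ)}.Finite)
    (hvan : ∀ y : Fin m → Λ, (∀ i, v (y i) = 0) →
      ∃ s : HahnSeries.SummableFamily ℝ ℂ (Fin m → ℤ),
        (∀ ν, s ν = f ν * ∏ i, (y i) ^ (ν i)) ∧ s.hsum = 0) :
    ∀ ν, f ν = 0 := by
  intro ν
  ext r
  have hfin : (Function.support fun ν => (f ν).coeff r).Finite :=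
    (hconv r).subset fun ν hν =>
      ⟨fun h0 => hν (by simp [h0]), HahnSeries.addVal_le_of_coeff_ne_zero hν⟩
  refine congr_fun (eq_zero_of_finsum_mul_prod_zpow_eq_zero hfin fun c => ?_) ν
  obtain ⟨s, hs, hsum⟩ := hvan (fun i => HahnSeries.C (c i : ℂ))
    fun i => HahnSeries.addVal_C (c i).ne_zero
  have := congr_arg (·.coeff r) hsum
  simpa only [HahnSeries.SummableFamily.coeff_hsum, hs, HahnSeries.coeff_mul_prod_C_zpow,
    HahnSeries.coeff_zero] using this
end

section
/- Well-definedness of evaluation of strictly convergent series (the claim of §3.1 that every element of Λ⟨H₁(L); Δ⟩ defines a function on H¹(L; U_Λ) × Δ): let m ∈ ℕ, γ : Fin m → ℝ, and let f : (Fin m → ℤ) → Λ be strictly convergent relative to γ. Then for every y : Fin m → Λ with v(y i) = 0 for all i, the family ν ↦ f ν · T^(Σ_i (ν i)·(γ i)) · ∏_i (y i)^(ν i) is a summable family; hence the evaluation f(y, γ) = Σ_ν f ν · T^(⟨ν,γ⟩) · y^ν is a well-defined element of Λ. -/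
/-!
Since `v` is a valuation and every `y i` has valuation zero, the term `f ν · T^⟨ν,γ⟩ · y^ν`
has valuation exactly `v (f ν) + ⟨ν,γ⟩`, so strict convergence says that only finitely many
terms have order `≤ r`, for every `r`. That alone makes a family of Hahn series summable: a
strictly decreasing sequence in the union of the supports stays below its first term, hence
inside the supports of the finitely many members of order at most that term, and a finite
union of well-founded sets is well-founded.
-/

namespace AddValuation

variable {Γ₀ : Type*}

theorem map_zpow_eq_zero {K : Type*} [DivisionRing K] [LinearOrderedAddCommGroupWithTop Γ₀]
    (v : AddValuation K Γ₀) {x : K} (hx : v x = 0) : ∀ n : ℤ, v (x ^ n) = 0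
  | (n : ℕ) => by rw [zpow_natCast, v.map_pow, hx, smul_zero]
  | .negSucc n => by rw [zpow_negSucc, v.map_inv, v.map_pow, hx, smul_zero, neg_zero]

theorem map_prod_eq_zero {R ι : Type*} [CommRing R] [LinearOrderedAddCommMonoidWithTop Γ₀]
    (v : AddValuation R Γ₀) {s : Finset ι} {g : ι → R} (hg : ∀ i ∈ s, v (g i) = 0) :
    v (∏ i ∈ s, g i) = 0 :=
  Finset.prod_induction g (fun x => v x = 0)
    (fun x y hx hy => by rw [v.map_mul, hx, hy, add_zero]) v.map_one hg

end AddValuation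

namespace HahnSeries

variable {Γ R α : Type*} [LinearOrder Γ]

theorem isWF_iUnion_support_of_finite_orderTop_le [Zero R] {a : α → HahnSeries Γ R}
    (ha : ∀ r : Γ, {i | (a i).orderTop ≤ r}.Finite) : (⋃ i, (a i).support).IsWF := by
  rw [Set.isWF_iff_no_descending_seq]
  intro g hg hmem
  set S := (ha (g 0)).toFinset
  have hbelow : ∀ n, g n ∈ ⋃ i ∈ S, (a i).support := fun n => by
    obtain ⟨i, hi⟩ := Set.mem_iUnion.1 (hmem n)
    have hi_le : (a i).orderTop ≤ g 0 :=
      (orderTop_le_of_coeff_ne_zero hi).trans (WithTop.coe_le_coe.2 (hg.antitone n.zero_le))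
    exact Set.mem_biUnion (by simpa [S] using hi_le) hi
  have hwf : (⋃ i ∈ S, (a i).support).IsWF :=
    (Finset.wellFoundedOn_bUnion S).2 fun i _ => (a i).isWF_support
  exact Set.isWF_iff_no_descending_seq.1 hwf g hg hbelow

def SummableFamily.ofFiniteOrderTopLE [AddCommMonoid R] (a : α → HahnSeries Γ R)
    (ha : ∀ r : Γ, {i | (a i).orderTop ≤ r}.Finite) : SummableFamily Γ R α where
  toFun := a
  isPWO_iUnion_support' := (isWF_iUnion_support_of_finite_orderTop_le ha).isPWO
  finite_co_support' g := (ha g).subset fun _ hi => orderTop_le_of_coeff_ne_zero hi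

end HahnSeries

theorem v_mul_single_mul_eq {x z : Λ} (r : ℝ) (hz : v z = 0) :
    v (x * HahnSeries.single r (1 : ℂ) * z) = v x + r := by
  unfold v at hz ⊢
  rw [AddValuation.map_mul, AddValuation.map_mul, hz, add_zero,
    HahnSeries.addVal_apply (x := HahnSeries.single _ _), HahnSeries.orderTop_single one_ne_zero]

/-- Well-definedness of evaluation of strictly convergent series: if `f` is strictly
convergent relative to `γ`, then for every `y` with `v (y i) = 0` for all `i`, the family
`ν ↦ f ν · T^(⟨ν,γ⟩) · y^ν` is a summable family, so the evaluation `f(y, γ)` is a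
well-defined element of `Λ`. -/
theorem evaluation_well_defined (m : ℕ) (γ : Fin m → ℝ) (f : (Fin m → ℤ) → Λ)
    (hconv : ∀ r : ℝ, {ν : Fin m → ℤ | f ν ≠ 0 ∧
      v (f ν) + ((∑ i, (ν i : ℝ) * γ i : ℝ) : WithTop ℝ) ≤ (r : WithTop ℝ)}.Finite)
    (y : Fin m → Λ) (hy : ∀ i, v (y i) = 0) :
    ∃ s : HahnSeries.SummableFamily ℝ ℂ (Fin m → ℤ),
      ∀ ν, s ν = f ν * HahnSeries.single (∑ i, (ν i : ℝ) * γ i) (1 : ℂ) *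
        ∏ i, (y i) ^ (ν i) := by
  have hv_term (ν : Fin m → ℤ) :
      v (f ν * HahnSeries.single (∑ i, (ν i : ℝ) * γ i) (1 : ℂ) * ∏ i, (y i) ^ (ν i)) =
        v (f ν) + ((∑ i, (ν i : ℝ) * γ i : ℝ) : WithTop ℝ) :=
    v_mul_single_mul_eq _ <| AddValuation.map_prod_eq_zero _ fun i _ =>
      AddValuation.map_zpow_eq_zero _ (hy i) (ν i)
  refine ⟨HahnSeries.SummableFamily.ofFiniteOrderTopLE
    (fun ν => f ν * HahnSeries.single (∑ i, (ν i : ℝ) * γ i) (1 : ℂ) * ∏ i, (y i) ^ (ν i))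
    fun r => (hconv r).subset fun ν hν => ?_, fun _ => rfl⟩
  have hle := (hv_term ν).symm.trans_le hν
  refine ⟨fun hf => ?_, hle⟩
  simp [hf, v] at hle
end

section
/- Exponential bijection from Λ₊ onto 1 + Λ₊: for every x ∈ Λ with v(x) > 0, the family ℕ → Λ given by k ↦ (k!)⁻¹ • x^k is a summable family; write exp(x) for its sum. Then v(exp(x) − 1) > 0, and the map x ↦ exp(x) is a bijection from Λ₊ = {x ∈ Λ | v(x) > 0} onto 1 + Λ₊ = {y ∈ Λ | v(y − 1) > 0}. -/
open Classical

/-- The exponential of a Hahn series: the sum of the summable family `k ↦ (k!)⁻¹ • x^k`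
whenever that family is summable (and `0` otherwise). -/
noncomputable def Exp (x : Λ) : Λ :=
  if h : ∃ s : HahnSeries.SummableFamily ℝ ℂ ℕ,
      ∀ k : ℕ, s k = ((k.factorial : ℚ)⁻¹) • x ^ k
  then h.choose.hsum else 0

/-
For `0 < v x` the exponential is the substitution `PowerSeries.heval x (PowerSeries.exp ℂ)`, so
`exp x - 1 - x` is `x ^ 2` times a series of nonnegative valuation and `v (exp x - 1) = v x`.
Regrouping the Cauchy product of two exponential series along antidiagonals gives
`exp (a + b) = exp a * exp b`, whence injectivity. For `y ∈ 1 + Λ₊`, Newton's iteration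
`x ↦ x + y * exp (-x) - 1` for `exp x = y` at least doubles the valuation of the defect
`y * exp (-x) - 1`; so the steps form a summable family, and at its sum the defect vanishes.
-/

open HahnSeries Finset

theorem WithTop.exists_coe_pos_le {α : Type*} [Preorder α] [Zero α] [NoMaxOrder α]
    {w : WithTop α} (hw : 0 < w) : ∃ c : α, 0 < c ∧ (c : WithTop α) ≤ w := by
  induction w using WithTop.recTopCoe with
  | top => obtain ⟨c, hc⟩ := exists_gt (0 : α); exact ⟨c, hc, le_top⟩
  | coe r => exact ⟨r, WithTop.coe_pos.1 hw, le_rfl⟩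

namespace HahnSeries.SummableFamily

variable {Γ R α : Type*} [LinearOrder Γ]

theorem le_orderTop_hsum [AddCommMonoid R] (s : SummableFamily Γ R α) {b : WithTop Γ}
    (h : ∀ a, b ≤ (s a).orderTop) : b ≤ s.hsum.orderTop :=
  le_orderTop_iff_forall.2 fun g hg => by
    rw [coeff_hsum]
    exact finsum_eq_zero_of_forall_eq_zero fun a =>
      coeff_eq_zero_of_lt_orderTop (hg.trans_le (h a))

theorem le_orderTop_hsum_sub_sum_range [AddCommGroup R] (s : SummableFamily Γ R ℕ) (N : ℕ)
    {b : WithTop Γ} (h : ∀ n, N ≤ n → b ≤ (s n).orderTop) :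
    b ≤ (s.hsum - ∑ n ∈ range N, s n).orderTop :=
  le_orderTop_iff_forall.2 fun g hg => by
    have hsupp : (Function.support fun n => (s n).coeff g) ⊆ range N := fun n hn => by
      by_contra hN
      exact hn (coeff_eq_zero_of_lt_orderTop (hg.trans_le (h n (by simpa using hN))))
    rw [coeff_sub, coeff_hsum, finsum_eq_sum_of_support_subset _ hsupp, coeff_sum, sub_self]

def ofFiniteOrderTopLE_s7 [AddCommMonoid R] (s : α → HahnSeries Γ R)
    (hs : ∀ g : Γ, {a | (s a).orderTop ≤ g}.Finite) : SummableFamily Γ R α where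
  toFun := s
  isPWO_iUnion_support' := by
    rw [Set.isPWO_iff_isWF, Set.isWF_iff_no_descending_seq]
    intro f hf hmem
    -- below `f 0`, only the finitely many members of order at most `f 0` contribute
    have hbelow : ∀ n, f n ∈ ⋃ a ∈ (hs (f 0)).toFinset, (s a).support := fun n => by
      obtain ⟨a, ha⟩ := Set.mem_iUnion.1 (hmem n)
      refine Set.mem_biUnion ?_ ha
      rw [Finset.mem_coe, Set.Finite.mem_toFinset]
      exact (orderTop_le_of_coeff_ne_zero ha).trans (WithTop.coe_le_coe.2 (hf.antitone n.zero_le))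
    exact Set.isWF_iff_no_descending_seq.1
      ((Finset.isWF_bUnion _).2 fun a _ => (s a).isWF_support) f hf hbelow
  finite_co_support' g := (hs g).subset fun _ ha => orderTop_le_of_coeff_ne_zero ha

section antidiagonal

variable {M : Type*} [AddMonoid M] [HasAntidiagonal M] [AddCommMonoid R]

def antidiagonalSum (s : SummableFamily Γ R (M × M)) : SummableFamily Γ R M where
  toFun n := ∑ p ∈ antidiagonal n, s p
  isPWO_iUnion_support' := s.isPWO_iUnion_support.mono fun g hg => by
    obtain ⟨n, hn⟩ := Set.mem_iUnion.1 hg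
    rw [mem_support, coeff_sum] at hn
    obtain ⟨p, -, hp⟩ := exists_ne_zero_of_sum_ne_zero hn
    exact Set.mem_iUnion.2 ⟨p, hp⟩
  finite_co_support' g := ((s.finite_co_support g).image fun p => p.1 + p.2).subset fun n hn => by
    rw [Set.mem_ofPred_eq, coeff_sum] at hn
    obtain ⟨p, hp, hpg⟩ := exists_ne_zero_of_sum_ne_zero hn
    exact ⟨p, hpg, HasAntidiagonal.mem_antidiagonal.1 hp⟩

theorem antidiagonalSum_apply (s : SummableFamily Γ R (M × M)) (n : M) :
    s.antidiagonalSum n = ∑ p ∈ antidiagonal n, s p :=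
  rfl

theorem hsum_antidiagonalSum (s : SummableFamily Γ R (M × M)) :
    s.antidiagonalSum.hsum = s.hsum := by
  ext g
  set T := (s.coeff g).support
  have hT : ∀ p, (s p).coeff g ≠ 0 → p ∈ T := fun p hp => Finsupp.mem_support_iff.2 hp
  rw [coeff_hsum_eq_sum_of_subset (t := T.image fun p => p.1 + p.2) ?_, coeff_hsum_eq_sum (s := s),
    ← sum_fiberwise_of_maps_to (g := fun p : M × M => p.1 + p.2) fun p hp =>
      mem_image_of_mem _ hp]
  · refine sum_congr rfl fun n _ => ?_
    rw [antidiagonalSum_apply, coeff_sum]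
    refine (sum_subset (fun p hp => HasAntidiagonal.mem_antidiagonal.2 (mem_filter.1 hp).2)
      fun p hp hpT => ?_).symm
    by_contra h
    exact hpT (mem_filter.2 ⟨hT p h, HasAntidiagonal.mem_antidiagonal.1 hp⟩)
  · intro n hn
    rw [Set.mem_ofPred_eq, antidiagonalSum_apply, coeff_sum] at hn
    obtain ⟨p, hp, hpg⟩ := exists_ne_zero_of_sum_ne_zero hn
    exact mem_image.2 ⟨p, hT p hpg, HasAntidiagonal.mem_antidiagonal.1 hp⟩

end antidiagonal

end HahnSeries.SummableFamily

namespace HahnSeries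

variable {Γ R : Type*}

theorem lt_orderTop_add [LinearOrder Γ] [AddMonoid R] {x y : HahnSeries Γ R} {b : WithTop Γ}
    (hx : b < x.orderTop) (hy : b < y.orderTop) : b < (x + y).orderTop :=
  (lt_min hx hy).trans_le min_orderTop_le_orderTop_add

theorem lt_orderTop_sub [LinearOrder Γ] [AddGroup R] {x y : HahnSeries Γ R} {b : WithTop Γ}
    (hx : b < x.orderTop) (hy : b < y.orderTop) : b < (x - y).orderTop := by
  rw [sub_eq_add_neg]
  exact lt_orderTop_add hx (by rwa [orderTop_neg])

end HahnSeries

namespace PowerSeries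

variable {Γ R : Type*}

theorem orderTop_heval_nonneg [AddCommMonoid Γ] [LinearOrder Γ] [IsOrderedCancelAddMonoid Γ]
    [CommRing R] {x : HahnSeries Γ R} (hx : 0 < x.orderTop) (f : PowerSeries R) :
    0 ≤ (heval x f).orderTop := by
  rw [heval_apply]
  refine SummableFamily.le_orderTop_hsum _ fun n => ?_
  rw [SummableFamily.powerSeriesFamily_of_orderTop_pos hx]
  exact (nsmul_nonneg hx.le n).trans
    (orderTop_nsmul_le_orderTop_pow.trans (not_lt.1 (orderTop_smul_not_lt _ _)))

end PowerSeries

open PowerSeries (heval heval_apply heval_X orderTop_heval_nonneg)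

theorem powerSeriesFamily_exp_apply {x : Λ} (hx : 0 < x.orderTop) (k : ℕ) :
    SummableFamily.powerSeriesFamily x (PowerSeries.exp ℂ) k =
      ((k.factorial : ℚ)⁻¹) • x ^ k := by
  ext g
  rw [SummableFamily.powerSeriesFamily_of_orderTop_pos hx, PowerSeries.coeff_exp, coeff_smul,
    coeff_smul, algebraMap_smul, one_div]

theorem powerSeriesFamily_exp_eq_coeff_rescale {x : Λ} (hx : 0 < x.orderTop) (k : ℕ) :
    SummableFamily.powerSeriesFamily x (PowerSeries.exp ℂ) k =
      PowerSeries.coeff k (PowerSeries.rescale x (PowerSeries.exp Λ)) := by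
  rw [SummableFamily.powerSeriesFamily_of_orderTop_pos hx, PowerSeries.coeff_rescale,
    PowerSeries.coeff_exp, PowerSeries.coeff_exp, eq_ratCast (algebraMap ℚ ℂ),
    eq_ratCast (algebraMap ℚ Λ), ← single_zero_ratCast, mul_comm, single_zero_mul_eq_smul]

theorem exp_eq_heval {x : Λ} (hx : 0 < x.orderTop) : Exp x = heval x (PowerSeries.exp ℂ) := by
  have h : ∃ s : SummableFamily ℝ ℂ ℕ, ∀ k, s k = ((k.factorial : ℚ)⁻¹) • x ^ k :=
    ⟨_, powerSeriesFamily_exp_apply hx⟩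
  rw [Exp, dif_pos h, heval_apply]
  exact congrArg SummableFamily.hsum <| SummableFamily.ext fun k =>
    (h.choose_spec k).trans (powerSeriesFamily_exp_apply hx k).symm

theorem exp_zero : Exp 0 = 1 := by
  rw [exp_eq_heval (by simp), heval_apply, SummableFamily.powerSeriesFamily_hsum_zero,
    PowerSeries.constantCoeff_exp, one_smul]

theorem exp_add {a b : Λ} (ha : 0 < a.orderTop) (hb : 0 < b.orderTop) :
    Exp (a + b) = Exp a * Exp b := by
  have hab := lt_orderTop_add ha hb
  rw [exp_eq_heval ha, exp_eq_heval hb, exp_eq_heval hab, heval_apply, heval_apply, heval_apply,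
    ← SummableFamily.hsum_mul, ← SummableFamily.hsum_antidiagonalSum]
  congr 1
  ext1 k
  rw [SummableFamily.antidiagonalSum_apply, powerSeriesFamily_exp_eq_coeff_rescale hab,
    ← PowerSeries.exp_mul_exp_eq_exp_add, PowerSeries.coeff_mul]
  refine sum_congr rfl fun p _ => ?_
  rw [SummableFamily.mul_toFun, powerSeriesFamily_exp_eq_coeff_rescale ha,
    powerSeriesFamily_exp_eq_coeff_rescale hb]

theorem le_orderTop_exp_sub_one_sub {x : Λ} (hx : 0 < x.orderTop) :
    x.orderTop + x.orderTop ≤ (Exp x - 1 - x).orderTop := by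
  obtain ⟨q, hq⟩ : PowerSeries.X ^ 2 ∣ PowerSeries.exp ℂ - 1 - PowerSeries.X :=
    PowerSeries.X_pow_dvd_iff.2 fun m hm => by interval_cases m <;> simp
  have heval_eq : heval x (PowerSeries.exp ℂ - 1 - PowerSeries.X) = Exp x - 1 - x := by
    rw [map_sub, map_sub, map_one, heval_X x hx, exp_eq_heval hx]
  rw [← heval_eq, hq, map_mul, map_pow, heval_X x hx, orderTop_mul, pow_two, orderTop_mul]
  exact le_add_of_nonneg_right (orderTop_heval_nonneg hx q)

theorem orderTop_exp_sub_one {x : Λ} (hx : 0 < x.orderTop) :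
    (Exp x - 1).orderTop = x.orderTop := by
  rcases eq_or_ne x 0 with rfl | hx0
  · rw [exp_zero, sub_self]
  have hlt : x.orderTop < (Exp x - 1 - x).orderTop := by
    refine lt_of_lt_of_le ?_ (le_orderTop_exp_sub_one_sub hx)
    rw [orderTop_of_ne_zero hx0] at hx ⊢
    exact_mod_cast lt_add_of_pos_right _ (WithTop.coe_pos.1 hx)
  rw [show Exp x - 1 = x + (Exp x - 1 - x) by ring, orderTop_add_eq_left hlt]

theorem orderTop_exp {x : Λ} (hx : 0 < x.orderTop) : (Exp x).orderTop = 0 := by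
  have hlt : (1 : Λ).orderTop < (Exp x - 1).orderTop := by
    rwa [orderTop_one, orderTop_exp_sub_one hx]
  rw [show Exp x = 1 + (Exp x - 1) by ring, orderTop_add_eq_left hlt, orderTop_one]

theorem exp_ne_zero {x : Λ} (hx : 0 < x.orderTop) : Exp x ≠ 0 := fun h => by
  simpa [h] using orderTop_exp hx

theorem exp_injOn : Set.InjOn Exp {x : Λ | 0 < x.orderTop} := by
  intro a ha b hb hab
  have hsub : 0 < (a - b).orderTop := lt_orderTop_sub ha hb
  have hone : Exp (a - b) = 1 := by
    refine mul_right_cancel₀ (exp_ne_zero hb) ?_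
    rw [← exp_add hsub hb, sub_add_cancel, hab, one_mul]
  have := orderTop_exp_sub_one hsub
  rwa [hone, sub_self, orderTop_zero, eq_comm, orderTop_eq_top, sub_eq_zero] at this

theorem le_orderTop_one_add_mul_exp_neg_self_sub_one {e : Λ} (he : 0 < e.orderTop) :
    e.orderTop + e.orderTop ≤ ((1 + e) * Exp (-e) - 1).orderTop := by
  have hne : 0 < (-e).orderTop := by rwa [orderTop_neg]
  rw [show (1 + e) * Exp (-e) - 1 = (Exp (-e) - 1 - -e) + e * (Exp (-e) - 1) by ring]
  refine le_trans (le_min ?_ ?_) min_orderTop_le_orderTop_add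
  · simpa only [orderTop_neg] using le_orderTop_exp_sub_one_sub hne
  · rw [orderTop_mul, orderTop_exp_sub_one hne, orderTop_neg]

theorem min_le_orderTop_one_add_mul_exp_neg_sub_one (e : Λ) {t : Λ} (ht : 0 < t.orderTop) :
    min e.orderTop t.orderTop ≤ ((1 + e) * Exp (-t) - 1).orderTop := by
  have hnt : 0 < (-t).orderTop := by rwa [orderTop_neg]
  rw [show (1 + e) * Exp (-t) - 1 = e * Exp (-t) + (Exp (-t) - 1) by ring]
  refine le_trans (le_of_eq ?_) min_orderTop_le_orderTop_add
  rw [orderTop_mul, orderTop_exp hnt, add_zero, orderTop_exp_sub_one hnt, orderTop_neg]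

section Newton

variable {y : Λ} {c : ℝ}

/-- Newton's method for `Exp x = y`: `x ↦ x - (Exp x - y) / Exp x`. -/
noncomputable def newtonLog (y : Λ) : ℕ → Λ
  | 0 => 0
  | n + 1 => newtonLog y n + (y * Exp (-newtonLog y n) - 1)

noncomputable def newtonLogError (y : Λ) (n : ℕ) : Λ :=
  y * Exp (-newtonLog y n) - 1

theorem newtonLog_succ (y : Λ) (n : ℕ) :
    newtonLog y (n + 1) = newtonLog y n + newtonLogError y n :=
  rfl

theorem newtonLog_eq_sum (y : Λ) (N : ℕ) :
    newtonLog y N = ∑ n ∈ range N, newtonLogError y n := by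
  induction N with
  | zero => rfl
  | succ N ih => rw [newtonLog_succ, ih, sum_range_succ]

theorem newtonLogError_succ {n : ℕ} (hx : 0 < (newtonLog y n).orderTop)
    (he : 0 < (newtonLogError y n).orderTop) :
    newtonLogError y (n + 1) = (1 + newtonLogError y n) * Exp (-newtonLogError y n) - 1 := by
  have hy : y * Exp (-newtonLog y n) = 1 + newtonLogError y n := by
    rw [newtonLogError]; ring
  rw [newtonLogError, newtonLog_succ, neg_add, exp_add (by rwa [orderTop_neg])
    (by rwa [orderTop_neg]), ← mul_assoc, hy]

theorem newtonLog_orderTop (hc : 0 < c) (hy : (c : WithTop ℝ) ≤ (y - 1).orderTop) :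
    ∀ n : ℕ, 0 < (newtonLog y n).orderTop ∧
      (((n + 1) * c : ℝ) : WithTop ℝ) ≤ (newtonLogError y n).orderTop
  | 0 => by
    refine ⟨by simp [newtonLog], ?_⟩
    rwa [newtonLogError, newtonLog, neg_zero, exp_zero, mul_one, Nat.cast_zero, zero_add, one_mul]
  | n + 1 => by
    obtain ⟨hx, he⟩ := newtonLog_orderTop hc hy n
    have hc_le : (c : WithTop ℝ) ≤ (newtonLogError y n).orderTop :=
      (WithTop.coe_le_coe.2 (le_mul_of_one_le_left hc.le
        (by linarith [n.cast_nonneg (α := ℝ)]))).trans he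
    have he_pos : 0 < (newtonLogError y n).orderTop := (WithTop.coe_pos.2 hc).trans_le hc_le
    refine ⟨by rw [newtonLog_succ]; exact lt_orderTop_add hx he_pos, ?_⟩
    rw [newtonLogError_succ hx he_pos]
    refine le_trans ?_ (le_orderTop_one_add_mul_exp_neg_self_sub_one he_pos)
    rw [show (((n + 1 : ℕ) : ℝ) + 1) * c = (n + 1) * c + c by push_cast; ring, WithTop.coe_add]
    exact add_le_add he hc_le

theorem coe_le_orderTop_newtonLogError (hc : 0 < c)
    (hy : (c : WithTop ℝ) ≤ (y - 1).orderTop) {N n : ℕ} (hNn : N ≤ n) :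
    (((N + 1) * c : ℝ) : WithTop ℝ) ≤ (newtonLogError y n).orderTop :=
  (WithTop.coe_le_coe.2 (by gcongr)).trans (newtonLog_orderTop hc hy n).2

noncomputable def newtonLogErrorFamily (hc : 0 < c)
    (hy : (c : WithTop ℝ) ≤ (y - 1).orderTop) : SummableFamily ℝ ℂ ℕ :=
  SummableFamily.ofFiniteOrderTopLE_s7 (newtonLogError y) fun g =>
    (Set.finite_Iic ⌊g / c⌋₊).subset fun n hn => by
      have := WithTop.coe_le_coe.1 ((coe_le_orderTop_newtonLogError hc hy le_rfl).trans hn)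
      exact Nat.le_floor ((le_div_iff₀ hc).2 (by nlinarith))

theorem coe_le_orderTop_hsum_sub_newtonLog (hc : 0 < c)
    (hy : (c : WithTop ℝ) ≤ (y - 1).orderTop) (N : ℕ) :
    (((N + 1) * c : ℝ) : WithTop ℝ) ≤
      ((newtonLogErrorFamily hc hy).hsum - newtonLog y N).orderTop := by
  rw [newtonLog_eq_sum]
  exact SummableFamily.le_orderTop_hsum_sub_sum_range _ N fun n hn =>
    coe_le_orderTop_newtonLogError hc hy hn

theorem orderTop_hsum_newtonLogErrorFamily_pos (hc : 0 < c)
    (hy : (c : WithTop ℝ) ≤ (y - 1).orderTop) :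
    0 < (newtonLogErrorFamily hc hy).hsum.orderTop := by
  have := coe_le_orderTop_hsum_sub_newtonLog hc hy 0
  rw [newtonLog, sub_zero, Nat.cast_zero, zero_add, one_mul] at this
  exact (WithTop.coe_pos.2 hc).trans_le this

theorem exp_hsum_newtonLogErrorFamily (hc : 0 < c)
    (hy : (c : WithTop ℝ) ≤ (y - 1).orderTop) : Exp (newtonLogErrorFamily hc hy).hsum = y := by
  set x := (newtonLogErrorFamily hc hy).hsum
  have hx := orderTop_hsum_newtonLogErrorFamily_pos hc hy
  have hdefect (N : ℕ) : (((N + 1) * c : ℝ) : WithTop ℝ) ≤ (y * Exp (-x) - 1).orderTop := by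
    have hxN := (newtonLog_orderTop hc hy N).1
    have ht : 0 < (x - newtonLog y N).orderTop := lt_orderTop_sub hx hxN
    have hsplit : y * Exp (-x) - 1 =
        (1 + newtonLogError y N) * Exp (-(x - newtonLog y N)) - 1 := by
      rw [show -x = -newtonLog y N + -(x - newtonLog y N) by ring,
        exp_add (by rwa [orderTop_neg]) (by rwa [orderTop_neg]), newtonLogError]
      ring
    rw [hsplit]
    exact (le_min (coe_le_orderTop_newtonLogError hc hy le_rfl)
      (coe_le_orderTop_hsum_sub_newtonLog hc hy N)).trans
      (min_le_orderTop_one_add_mul_exp_neg_sub_one _ ht)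
  have hinv : y * Exp (-x) = 1 := by
    rw [← sub_eq_zero, ← orderTop_eq_top]
    refine WithTop.eq_top_iff_forall_ge.2 fun g => ?_
    obtain ⟨N, hN⟩ := exists_nat_gt (g / c)
    refine le_trans (WithTop.coe_le_coe.2 ?_) (hdefect N)
    rw [div_lt_iff₀ hc] at hN
    nlinarith
  rw [← mul_one (Exp x), ← hinv, mul_left_comm, ← exp_add hx (by rwa [orderTop_neg]),
    add_neg_cancel, exp_zero, mul_one]

end Newton

theorem exp_surjOn : Set.SurjOn Exp {x : Λ | 0 < x.orderTop} {y : Λ | 0 < (y - 1).orderTop} :=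
  fun _ hy =>
    have ⟨_, hc, hcy⟩ := WithTop.exists_coe_pos_le hy
    ⟨_, orderTop_hsum_newtonLogErrorFamily_pos hc hcy, exp_hsum_newtonLogErrorFamily hc hcy⟩

/-- Exponential bijection from `Λ₊` onto `1 + Λ₊`: for `v x > 0` the family
`k ↦ (k!)⁻¹ • x^k` is summable, `v (exp x − 1) > 0`, and `exp` is a bijection from
`{x | v x > 0}` onto `{y | v (y − 1) > 0}`. -/
theorem exp_bijection :
    (∀ x : Λ, 0 < v x → ∃ s : HahnSeries.SummableFamily ℝ ℂ ℕ,
      ∀ k : ℕ, s k = ((k.factorial : ℚ)⁻¹) • x ^ k) ∧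
    (∀ x : Λ, 0 < v x → 0 < v (Exp x - 1)) ∧
    Set.BijOn Exp {x : Λ | 0 < v x} {y : Λ | 0 < v (y - 1)} := by
  simp only [v, addVal_apply]
  have hmaps : ∀ x : Λ, 0 < x.orderTop → 0 < (Exp x - 1).orderTop := fun x hx => by
    rwa [orderTop_exp_sub_one hx]
  exact ⟨fun x hx => ⟨_, powerSeriesFamily_exp_apply hx⟩, hmaps, hmaps, exp_injOn,
    exp_surjOn⟩
end

section
/- Strictly convergent series are closed under convolution (well-definedness of the ring structure on the algebra Λ⟨H₁(L); Δ⟩ of strictly convergent formal power series of §3.1): let m ∈ ℕ, γ : Fin m → ℝ, and let f, g : (Fin m → ℤ) → Λ both be strictly convergent relative to γ. Then (i) for every α : Fin m → ℤ the family ν ↦ f ν · g (α − ν) is a summable family, and (ii) the function h : (Fin m → ℤ) → Λ defined by h α = Σ_ν f ν · g(α − ν) is again strictly convergent relative to γ. -/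
/-- `f : (Fin m → ℤ) → Λ` is strictly convergent relative to `γ : Fin m → ℝ` if for every
`r ∈ ℝ` the set `{ν | f ν ≠ 0 ∧ v (f ν) + ⟨ν, γ⟩ ≤ r}` is finite. -/
def StrictConv (m : ℕ) (γ : Fin m → ℝ) (f : (Fin m → ℤ) → Λ) : Prop :=
  ∀ r : ℝ, {ν : Fin m → ℤ | f ν ≠ 0 ∧
    v (f ν) + ((∑ i, (ν i : ℝ) * γ i : ℝ) : WithTop ℝ) ≤ (r : WithTop ℝ)}.Finite

/-!
Write `w_f(ν) = v(f ν) + ⟨ν, γ⟩`. Since `v` turns products into sums and `⟨·, γ⟩` is additive,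
the `ν`-th term of the convolution at `α` satisfies
`v(f ν · g(α - ν)) + ⟨α, γ⟩ = w_f(ν) + w_g(α - ν)`. A function with finite sublevel sets is
bounded below, so only finitely many pairs `(ν, μ)` have `w_f(ν) + w_g(μ) ≤ r`. For fixed `α`
the valuations of the terms therefore tend to `∞`, which makes the family summable; and the
lowest coefficient of `h α` comes from some term, so `v(h α) + ⟨α, γ⟩ ≤ r` forces `α = ν + μ`
for one of these finitely many pairs.
-/

open HahnSeries

theorem Set.isPWO_of_forall_isPWO_inter_Iic {α : Type*} [LinearOrder α] {s : Set α}
    (h : ∀ a ∈ s, (s ∩ Set.Iic a).IsPWO) : s.IsPWO := by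
  refine Set.partiallyWellOrderedOn_iff_exists_lt.mpr fun u hu => ?_
  by_cases hbig : ∃ n, u 0 < u n
  · obtain ⟨n, hn⟩ := hbig
    exact ⟨0, n, Nat.pos_of_ne_zero (by rintro rfl; exact lt_irrefl _ hn), hn.le⟩
  · simp only [not_exists, not_lt] at hbig
    exact (h _ (hu 0)).exists_lt fun n => ⟨hu n, hbig n⟩

namespace HahnSeries

variable {Γ R ι : Type*} [LinearOrder Γ] [AddCommMonoid R]

theorem isPWO_iUnion_support_of_finite_orderTop_le {a : ι → HahnSeries Γ R}
    (ha : ∀ g : Γ, {i | (a i).orderTop ≤ g}.Finite) : (⋃ i, (a i).support).IsPWO := by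
  refine Set.isPWO_of_forall_isPWO_inter_Iic fun g _ => ?_
  refine ((Finset.isPWO_bUnion (ha g).toFinset).mpr fun i _ => (a i).isPWO_support).mono ?_
  rintro x ⟨hx, hxg⟩
  obtain ⟨i, hxi⟩ := Set.mem_iUnion.mp hx
  exact Set.mem_biUnion ((ha g).mem_toFinset.mpr
    ((orderTop_le_of_coeff_ne_zero hxi).trans (WithTop.coe_le_coe.mpr hxg))) hxi

def SummableFamily.ofFiniteOrderTopLe (a : ι → HahnSeries Γ R)
    (ha : ∀ g : Γ, {i | (a i).orderTop ≤ g}.Finite) : SummableFamily Γ R ι where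
  toFun := a
  isPWO_iUnion_support' := isPWO_iUnion_support_of_finite_orderTop_le ha
  finite_co_support' g := (ha g).subset fun _ hi => orderTop_le_of_coeff_ne_zero hi

theorem SummableFamily.exists_orderTop_le_orderTop_hsum (s : SummableFamily Γ R ι)
    (hs : s.hsum ≠ 0) : ∃ i, (s i).orderTop ≤ s.hsum.orderTop := by
  obtain ⟨g, hg⟩ := WithTop.ne_top_iff_exists.mp (orderTop_ne_top.mpr hs)
  obtain ⟨i, hi⟩ := Set.mem_iUnion.mp (support_hsum_subset (coeff_orderTop_ne hg.symm))
  exact ⟨i, hg ▸ orderTop_le_of_coeff_ne_zero hi⟩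

end HahnSeries

section FiniteSublevels

variable {ι κ G : Type*}

theorem exists_coe_le_of_finite_sublevel [LinearOrder G] [Nonempty G] {u : ι → WithTop G}
    (hu : ∀ r : G, {i | u i ≤ r}.Finite) :
    ∃ B : G, ∀ i, (B : WithTop G) ≤ u i := by
  obtain ⟨r⟩ := ‹Nonempty G›
  obtain ⟨B, hB⟩ := ((hu r).image fun i => (u i).untopD r).bddBelow
  refine ⟨min B r, fun i => ?_⟩
  by_cases hi : u i ≤ r
  · obtain ⟨x, hx⟩ := WithTop.ne_top_iff_exists.mp (ne_top_of_le_ne_top WithTop.coe_ne_top hi)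
    rw [← hx]
    exact WithTop.coe_le_coe.mpr (min_le_of_left_le (hB ⟨i, hi, by simp [← hx]⟩))
  · exact (WithTop.coe_le_coe.mpr (min_le_right B r)).trans (not_le.mp hi).le

variable [AddCommGroup G] [LinearOrder G] [IsOrderedAddMonoid G]

theorem WithTop.le_coe_sub_of_add_coe_le {x : WithTop G} {b r : G} (h : x + b ≤ r) :
    x ≤ ((r - b : G) : WithTop G) := by
  induction x using WithTop.recTopCoe with
  | top => simp at h
  | coe x => exact WithTop.coe_le_coe.mpr (le_sub_iff_add_le.mpr (WithTop.coe_le_coe.mp h))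

theorem finite_add_le_of_finite_sublevel {u : ι → WithTop G} {w : κ → WithTop G}
    (hu : ∀ r : G, {i | u i ≤ r}.Finite) (hw : ∀ r : G, {j | w j ≤ r}.Finite) (r : G) :
    {p : ι × κ | u p.1 + w p.2 ≤ r}.Finite := by
  have : Nonempty G := ⟨r⟩
  obtain ⟨Bu, hBu⟩ := exists_coe_le_of_finite_sublevel hu
  obtain ⟨Bw, hBw⟩ := exists_coe_le_of_finite_sublevel hw
  refine ((hu (r - Bw)).prod (hw (r - Bu))).subset fun ⟨i, j⟩ hij => ⟨?_, ?_⟩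
  · exact WithTop.le_coe_sub_of_add_coe_le ((add_le_add le_rfl (hBw j)).trans hij)
  · have hj : w j + Bu ≤ r := by rw [add_comm]; exact (add_le_add (hBu i) le_rfl).trans hij
    exact WithTop.le_coe_sub_of_add_coe_le hj

end FiniteSublevels

section StrictConv

variable {m : ℕ} {γ : Fin m → ℝ} {f g : (Fin m → ℤ) → Λ}

theorem v_eq_orderTop (x : Λ) : v x = x.orderTop := addVal_apply

noncomputable def twistedVal (γ : Fin m → ℝ) (f : (Fin m → ℤ) → Λ) (ν : Fin m → ℤ) :
    WithTop ℝ :=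
  v (f ν) + ((∑ i, (ν i : ℝ) * γ i : ℝ) : WithTop ℝ)

theorem strictConv_iff_finite_twistedVal_le :
    StrictConv m γ f ↔ ∀ r : ℝ, {ν | twistedVal γ f ν ≤ r}.Finite := by
  refine forall_congr' fun r => iff_of_eq (congrArg _ (Set.ext fun ν => ?_))
  refine and_iff_right_of_imp fun h hf => ?_
  simp [hf, v] at h

theorem v_mul_add_pairing (α ν : Fin m → ℤ) :
    v (f ν * g (α - ν)) + ((∑ i, (α i : ℝ) * γ i : ℝ) : WithTop ℝ) =
      twistedVal γ f ν + twistedVal γ g (α - ν) := by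
  have hpair : ∑ i, (α i : ℝ) * γ i = (∑ i, (ν i : ℝ) * γ i) + ∑ i, ((α - ν) i : ℝ) * γ i := by
    rw [← Finset.sum_add_distrib]
    refine Finset.sum_congr rfl fun i _ => ?_
    push_cast [Pi.sub_apply]
    ring
  rw [twistedVal, twistedVal, v, AddValuation.map_mul, hpair, WithTop.coe_add]
  exact add_add_add_comm _ _ _ _

theorem StrictConv.finite_orderTop_mul_le (hf : StrictConv m γ f) (hg : StrictConv m γ g)
    (α : Fin m → ℤ) (r : ℝ) : {ν | (f ν * g (α - ν)).orderTop ≤ r}.Finite := by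
  have hpairs := finite_add_le_of_finite_sublevel (strictConv_iff_finite_twistedVal_le.mp hf)
    (strictConv_iff_finite_twistedVal_le.mp hg) (r + ∑ i, (α i : ℝ) * γ i)
  refine (hpairs.preimage (fun ν _ μ _ h => congrArg Prod.fst h : Set.InjOn
    (fun ν => (ν, α - ν)) _)).subset fun ν hν => ?_
  rw [Set.mem_preimage, Set.mem_ofPred_eq, ← v_mul_add_pairing, WithTop.coe_add]
  exact add_le_add (by rwa [v_eq_orderTop]) le_rfl

theorem StrictConv.convolution (hf : StrictConv m γ f) (hg : StrictConv m γ g)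
    (h : (Fin m → ℤ) → Λ)
    (hh : ∀ α, ∃ s : SummableFamily ℝ ℂ (Fin m → ℤ), (∀ ν, s ν = f ν * g (α - ν)) ∧
      s.hsum = h α) :
    StrictConv m γ h := by
  rw [strictConv_iff_finite_twistedVal_le]
  intro r
  refine ((finite_add_le_of_finite_sublevel (strictConv_iff_finite_twistedVal_le.mp hf)
    (strictConv_iff_finite_twistedVal_le.mp hg) r).image fun p => p.1 + p.2).subset ?_
  intro α hα
  obtain ⟨s, hs, hsum⟩ := hh α
  have hne : s.hsum ≠ 0 := fun h0 => by simp [twistedVal, ← hsum, h0, v] at hα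
  obtain ⟨ν, hν⟩ := s.exists_orderTop_le_orderTop_hsum hne
  refine ⟨(ν, α - ν), ?_, add_sub_cancel ν α⟩
  rw [Set.mem_ofPred_eq, ← v_mul_add_pairing]
  refine le_trans (add_le_add ?_ le_rfl) hα
  rwa [v_eq_orderTop, v_eq_orderTop, ← hs, ← hsum]

end StrictConv

/-- Strictly convergent series are closed under convolution: (i) for each `α` the family
`ν ↦ f ν · g (α − ν)` is summable; (ii) the convolution `h α = Σ_ν f ν · g (α − ν)` is
again strictly convergent relative to `γ`. -/
theorem convolution_strictly_convergent (m : ℕ) (γ : Fin m → ℝ)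
    (f g : (Fin m → ℤ) → Λ) (hf : StrictConv m γ f) (hg : StrictConv m γ g) :
    (∀ α : Fin m → ℤ, ∃ s : HahnSeries.SummableFamily ℝ ℂ (Fin m → ℤ),
      ∀ ν, s ν = f ν * g (α - ν)) ∧
    (∀ h : (Fin m → ℤ) → Λ,
      (∀ α : Fin m → ℤ, ∃ s : HahnSeries.SummableFamily ℝ ℂ (Fin m → ℤ),
        (∀ ν, s ν = f ν * g (α - ν)) ∧ s.hsum = h α) →
      StrictConv m γ h) :=
  ⟨fun α => ⟨.ofFiniteOrderTopLe _ (hf.finite_orderTop_mul_le hg α), fun _ => rfl⟩,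
    hf.convolution hg⟩
end

section
/- Reduction to the residue field commutes with evaluation (the key step in the paper's proof of the Proposition of §1.2.3): let m ∈ ℕ and let f : (Fin m → ℤ) → Λ be strictly convergent relative to 0 with v(f ν) ≥ 0 for all ν, and let y : Fin m → Λ with v(y i) = 0 for all i. Let F = Σ_ν f ν · ∏_i (y i)^(ν i) be the evaluation, i.e. the sum of the corresponding summable family. Then v(F) ≥ 0, the set {ν | (f ν).coeff 0 ≠ 0} is finite, and F.coeff 0 equals the finite sum Σ_ν (f ν).coeff 0 · ∏_i ((y i).coeff 0)^(ν i), where the powers on the right are integer powers in ℂ of the nonzero complex numbers (y i).coeff 0. -/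
namespace AddValuation

theorem map_prod {R Γ₀ ι : Type*} [CommRing R] [LinearOrderedAddCommMonoidWithTop Γ₀]
    (v : AddValuation R Γ₀) (s : Finset ι) (f : ι → R) : v (∏ i ∈ s, f i) = ∑ i ∈ s, v (f i) :=
  _root_.map_prod v.toValuation f s

theorem map_zpow {K Γ₀ : Type*} [Field K] [LinearOrderedAddCommGroupWithTop Γ₀]
    (v : AddValuation K Γ₀) (x : K) (n : ℤ) : v (x ^ n) = n • v x :=
  map_zpow₀ v.toValuation x n

end AddValuation

namespace HahnSeries

section LinearOrder

variable {Γ R : Type*} [AddCommMonoid Γ] [LinearOrder Γ]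

theorem nonneg_of_mem_support [Zero R] {x : HahnSeries Γ R} (hx : 0 ≤ x.orderTop) {i : Γ}
    (hi : i ∈ x.support) : 0 ≤ i :=
  not_lt.1 fun h => hi (coeff_eq_zero_of_lt_orderTop (lt_of_lt_of_le (by exact_mod_cast h) hx))

theorem coeff_zero_mul_of_orderTop_nonneg [IsOrderedCancelAddMonoid Γ]
    [NonUnitalNonAssocSemiring R] {x y : HahnSeries Γ R} (hx : 0 ≤ x.orderTop)
    (hy : 0 ≤ y.orderTop) : (x * y).coeff 0 = x.coeff 0 * y.coeff 0 := by
  rw [coeff_mul, Finset.sum_eq_single (0, 0)]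
  · rintro ⟨i, j⟩ hij hne
    obtain ⟨hi, hj, hij⟩ := Finset.mem_antidiagonal.1 hij
    obtain ⟨rfl, rfl⟩ := (add_eq_zero_iff_of_nonneg (nonneg_of_mem_support hx hi)
      (nonneg_of_mem_support hy hj)).1 hij
    exact absurd rfl hne
  · intro h
    simp only [Finset.mem_antidiagonal, mem_support, add_zero, and_true, not_and_or,
      not_not] at h
    rcases h with h | h <;> simp [h]

theorem coeff_zero_eq_leadingCoeff [Zero R] {x : HahnSeries Γ R} (hx : x.orderTop = 0) :
    x.coeff 0 = x.leadingCoeff := by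
  have hx0 : x ≠ 0 := by rintro rfl; simp at hx
  rw [leadingCoeff_eq, WithTop.coe_eq_zero.1 ((order_eq_orderTop_of_ne_zero hx0).trans hx)]

variable (Γ R) in
@[simps!]
noncomputable def leadingCoeffHom [IsOrderedCancelAddMonoid Γ] [Semiring R] [NoZeroDivisors R] :
    HahnSeries Γ R →*₀ R where
  toFun := leadingCoeff
  map_zero' := leadingCoeff_zero
  map_one' := leadingCoeff_one
  map_mul' x y := leadingCoeff_mul x y

end LinearOrder

theorem SummableFamily.le_orderTop_hsum_s12 {Γ R α : Type*} [LinearOrder Γ] [AddCommMonoid R]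
    {s : SummableFamily Γ R α} {g : WithTop Γ} (h : ∀ a, g ≤ (s a).orderTop) :
    g ≤ s.hsum.orderTop :=
  le_orderTop_iff_forall.2 fun j hj => by
    rw [coeff_hsum]
    exact finsum_eq_zero_of_forall_eq_zero fun a => coeff_eq_zero_of_lt_orderTop (hj.trans_le (h a))

section Field

variable {Γ K ι : Type*} [AddCommGroup Γ] [LinearOrder Γ] [IsOrderedAddMonoid Γ] [Field K]

theorem orderTop_prod_zpow_eq_zero {t : Finset ι} {y : ι → HahnSeries Γ K} (n : ι → ℤ)
    (hy : ∀ i ∈ t, (y i).orderTop = 0) : (∏ i ∈ t, y i ^ n i).orderTop = 0 := by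
  simp only [← addVal_apply, AddValuation.map_prod, AddValuation.map_zpow]
  exact Finset.sum_eq_zero fun i hi => by rw [addVal_apply, hy i hi, smul_zero]

theorem coeff_zero_prod_zpow {t : Finset ι} {y : ι → HahnSeries Γ K} (n : ι → ℤ)
    (hy : ∀ i ∈ t, (y i).orderTop = 0) :
    (∏ i ∈ t, y i ^ n i).coeff 0 = ∏ i ∈ t, (y i).coeff 0 ^ n i := by
  rw [coeff_zero_eq_leadingCoeff (orderTop_prod_zpow_eq_zero n hy)]
  simp only [← leadingCoeffHom_apply, map_prod, map_zpow₀]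
  exact Finset.prod_congr rfl fun i hi => by
    rw [leadingCoeffHom_apply, coeff_zero_eq_leadingCoeff (hy i hi)]

end Field

end HahnSeries

open HahnSeries in
/-- Reduction to the residue field commutes with evaluation: if `f` is strictly convergent
relative to `0` with `v (f ν) ≥ 0` for all `ν`, and `v (y i) = 0` for all `i`, then the
evaluation `F = Σ_ν f ν · Π_i (y i)^(ν i)` satisfies `v F ≥ 0`, the set
`{ν | (f ν).coeff 0 ≠ 0}` is finite, and `F.coeff 0` equals the finite sum
`Σ_ν (f ν).coeff 0 · Π_i ((y i).coeff 0)^(ν i)` (integer powers in `ℂ`). -/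
theorem residue_commutes_with_evaluation (m : ℕ) (f : (Fin m → ℤ) → Λ)
    (hconv : ∀ r : ℝ, {ν : Fin m → ℤ | f ν ≠ 0 ∧ v (f ν) ≤ (r : WithTop ℝ)}.Finite)
    (hpos : ∀ ν, 0 ≤ v (f ν))
    (y : Fin m → Λ) (hy : ∀ i, v (y i) = 0)
    (s : HahnSeries.SummableFamily ℝ ℂ (Fin m → ℤ))
    (hs : ∀ ν, s ν = f ν * ∏ i, (y i) ^ (ν i)) :
    0 ≤ v s.hsum ∧
    {ν : Fin m → ℤ | (f ν).coeff 0 ≠ 0}.Finite ∧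
    s.hsum.coeff 0 = ∑ᶠ ν : Fin m → ℤ, (f ν).coeff 0 * ∏ i, ((y i).coeff 0) ^ (ν i) := by
  simp only [v, addVal_apply] at hconv hpos hy ⊢
  have hP (ν : Fin m → ℤ) : (∏ i, y i ^ ν i).orderTop = 0 :=
    orderTop_prod_zpow_eq_zero ν fun i _ => hy i
  refine ⟨SummableFamily.le_orderTop_hsum_s12 fun ν => ?_, (hconv 0).subset fun ν hν => ?_, ?_⟩
  · rw [hs]
    exact (add_nonneg (hpos ν) (hP ν).ge).trans orderTop_add_le_mul
  · exact ⟨ne_zero_of_coeff_ne_zero hν, orderTop_le_of_coeff_ne_zero hν⟩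
  · rw [SummableFamily.coeff_hsum]
    refine finsum_congr fun ν => ?_
    rw [hs, coeff_zero_mul_of_orderTop_nonneg (hpos ν) (hP ν).ge,
      coeff_zero_prod_zpow ν fun i _ => hy i]
end
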